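/- arXiv:2311.15845 — 2 statements merged into one kernel-verified Lean document; each statement's English description precedes it below -/
import Mathlib

section
/- In the convex variational regularization setting with Y = AX + ε and X_λ a minimizer of x ↦ ½‖Ax − Y‖² + λJ(x), with subgradients (1/λ)A*(Y − AX_λ) ∈ ∂J(X_λ) and A*Z ∈ ∂J(X), the symmetric Bregman distance satisfies almost surely: λ·d_J(X_λ, X) + ½‖A(X_λ − X)‖² ≤ ½‖Y − AX − λZ‖². -/
open scoped RealInnerProductSpace

theorem stmt_16 {H K : Type*} [NormedAddCommGroup H] [InnerProductSpace ℝ H]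
    [CompleteSpace H] [NormedAddCommGroup K] [InnerProductSpace ℝ K] [CompleteSpace K]
    (A : H →L[ℝ] K) (J : H → ℝ) (Yv : K) (Xlam Xv : H) (Z : K)
    (lam : ℝ) (hlam : 0 < lam)
    (hmin : ∀ x : H,
      (1/2) * ‖A Xlam - Yv‖^2 + lam * J Xlam ≤ (1/2) * ‖A x - Yv‖^2 + lam * J x)
    (hsub1 : ∀ u : H,
      J Xlam + ⟪(1/lam) • (A.adjoint (Yv - A Xlam)), u - Xlam⟫ ≤ J u)
    (hsub2 : ∀ u : H, J Xv + ⟪A.adjoint Z, u - Xv⟫ ≤ J u) :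
    lam * ⟪(1/lam) • (A.adjoint (Yv - A Xlam)) - A.adjoint Z, Xlam - Xv⟫ +
      (1/2) * ‖A (Xlam - Xv)‖^2 ≤ (1/2) * ‖Yv - A Xv - lam • Z‖^2 := by
  set w : K := A (Xlam - Xv) with hw
  set u : K := Yv - A Xv - lam • Z with hu
  have key : lam * ⟪(1/lam) • (A.adjoint (Yv - A Xlam)) - A.adjoint Z, Xlam - Xv⟫
      = ⟪u, w⟫ - ‖w‖^2 := by
    rw [inner_sub_left, inner_smul_left, ContinuousLinearMap.adjoint_inner_left,
      ContinuousLinearMap.adjoint_inner_left]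
    have h1 : A Xlam = A Xv + w := by simp [hw, map_sub]
    have h2 : Yv - A Xlam = u + lam • Z - w := by rw [h1, hu]; abel
    rw [h2]
    have hne : lam ≠ 0 := ne_of_gt hlam
    field_simp
    have hww : A Xlam - A Xv = w := by rw [hw, map_sub]
    rw [← hw, inner_sub_left, inner_add_left, inner_smul_left, real_inner_self_eq_norm_sq]
    simp only [starRingEnd_apply, star_trivial]
    simp only [mul_sub, mul_add, ← mul_assoc, mul_one_div_cancel hne, one_mul]
    ring
  rw [key]
  have hcs : ⟪u, w⟫ ≤ ‖u‖ * ‖w‖ := real_inner_le_norm u w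
  nlinarith [sq_nonneg (‖u‖ - ‖w‖)]
end

section
/- Under the assumptions of the convex regularization theorem (E[‖Y − AX‖²] ≤ τ², E[‖Z‖²] ≤ β², Z measurable w.r.t. X, E[ε|X] = 0 where ε = Y − AX), the expected symmetric Bregman distance satisfies E[d_J(X_λ, X)] ≤ τ²/(2λ) + β²λ/2 for all λ > 0, and with λ_* = τ/β, E[d_J(X_{λ_*}, X)] ≤ βτ. -/
open MeasureTheory
open scoped RealInnerProductSpace

private lemma aux_ineq {K : Type*} [NormedAddCommGroup K] [InnerProductSpace ℝ K]
    (lam : ℝ) (hlam : 0 < lam) (r e z : K) :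
    (1/lam) * ⟪r, e - r⟫ - ⟪z, e - r⟫ ≤ ‖e‖^2 / (2*lam) + lam * ‖z‖^2 / 2 := by
  have h1 : -⟪z, e - r⟫ ≤ ‖z‖ * ‖e - r‖ := by
    have ha := abs_real_inner_le_norm z (e - r)
    have hb := neg_abs_le ⟪z, e - r⟫
    linarith
  have h2 : ‖e - r‖^2 = ‖e‖^2 - 2*⟪e, r⟫ + ‖r‖^2 := by
    exact norm_sub_sq_real e r
  have h3 : ⟪r, e - r⟫ = ⟪e, r⟫ - ‖r‖^2 := by
    rw [inner_sub_right, real_inner_self_eq_norm_sq, real_inner_comm]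
  rw [h3]
  have key : lam * (‖z‖ * ‖e - r‖) ≤ lam^2 * ‖z‖^2 / 2 + ‖e - r‖^2 / 2 := by
    nlinarith [sq_nonneg (lam * ‖z‖ - ‖e - r‖)]
  have h1' : lam * (-⟪z, e - r⟫) ≤ lam * (‖z‖ * ‖e - r‖) :=
    mul_le_mul_of_nonneg_left h1 hlam.le
  have hbig : lam * ((1/lam) * (⟪e, r⟫ - ‖r‖^2) - ⟪z, e - r⟫)
      ≤ ‖e‖^2 / 2 + lam^2 * ‖z‖^2 / 2 := by
    have hl : lam ≠ 0 := hlam.ne'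
    have hc : lam * ((1/lam) * (⟪e, r⟫ - ‖r‖^2)) = ⟪e, r⟫ - ‖r‖^2 := by
      field_simp
    nlinarith [sq_nonneg ‖r‖]
  have hR : lam * (‖e‖^2 / (2*lam) + lam * ‖z‖^2 / 2) = ‖e‖^2 / 2 + lam^2 * ‖z‖^2 / 2 := by
    field_simp
  rw [← mul_le_mul_iff_right₀ hlam, hR]
  exact hbig

theorem stmt_17 {Ω H K : Type*} [MeasurableSpace Ω]
    [NormedAddCommGroup H] [InnerProductSpace ℝ H] [CompleteSpace H]
    [NormedAddCommGroup K] [InnerProductSpace ℝ K] [CompleteSpace K]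
    [MeasurableSpace H] [MeasurableSpace K]
    (μ : Measure Ω) [IsProbabilityMeasure μ]
    (A : H →L[ℝ] K) (J : H → ℝ)
    (τ β : ℝ) (hτ : 0 < τ) (hβ : 0 < β)
    (Xv : Ω → H) (eps Z : Ω → K) (Yv : Ω → K)
    (hXm : Measurable Xv)
    (hY : ∀ ω, Yv ω = A (Xv ω) + eps ω)
    (heps : Integrable eps μ)
    (heps2 : Integrable (fun ω => ‖eps ω‖^2) μ)
    (hcond0 : μ[eps | MeasurableSpace.comap Xv inferInstance] =ᵐ[μ] 0)
    (hcondvar : ∀ᵐ ω ∂μ,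
      (μ[fun ω' => ‖eps ω'‖^2 | MeasurableSpace.comap Xv inferInstance]) ω ≤ τ^2)
    (hZmeas : Measurable[MeasurableSpace.comap Xv inferInstance] Z)
    (hZ2 : Integrable (fun ω => ‖Z ω‖^2) μ)
    (hZbound : ∫ ω, ‖Z ω‖^2 ∂μ ≤ β^2)
    (hepsZ : Integrable (fun ω => ⟪eps ω, Z ω⟫) μ)
    (Xlam : ℝ → Ω → H)
    (hmin : ∀ lam : ℝ, 0 < lam → ∀ ω, ∀ x : H,
      (1/2) * ‖A (Xlam lam ω) - Yv ω‖^2 + lam * J (Xlam lam ω) ≤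
        (1/2) * ‖A x - Yv ω‖^2 + lam * J x)
    (hsub1 : ∀ lam : ℝ, 0 < lam → ∀ ω, ∀ u : H,
      J (Xlam lam ω) +
        ⟪(1/lam) • (A.adjoint (Yv ω - A (Xlam lam ω))), u - Xlam lam ω⟫ ≤ J u)
    (hsub2 : ∀ ω, ∀ u : H, J (Xv ω) + ⟪A.adjoint (Z ω), u - Xv ω⟫ ≤ J u)
    (dJ : ℝ → Ω → ℝ)
    (hdJ : ∀ lam : ℝ, ∀ ω, dJ lam ω =
      ⟪(1/lam) • (A.adjoint (Yv ω - A (Xlam lam ω))) - A.adjoint (Z ω),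
        Xlam lam ω - Xv ω⟫)
    (hdJint : ∀ lam : ℝ, 0 < lam → Integrable (dJ lam) μ) :
    (∀ lam : ℝ, 0 < lam → ∫ ω, dJ lam ω ∂μ ≤ τ^2 / (2 * lam) + β^2 * lam / 2) ∧
    ∫ ω, dJ (τ / β) ω ∂μ ≤ β * τ := by
  -- Step 1: E[‖eps‖²] ≤ τ²
  have hm : MeasurableSpace.comap Xv inferInstance ≤ (inferInstance : MeasurableSpace Ω) :=
    hXm.comap_le
  have heps_bound : ∫ ω, ‖eps ω‖^2 ∂μ ≤ τ^2 := by
    calc ∫ ω, ‖eps ω‖^2 ∂μ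
        = ∫ ω, (μ[fun ω' => ‖eps ω'‖^2 | MeasurableSpace.comap Xv inferInstance]) ω ∂μ :=
          (integral_condExp hm).symm
      _ ≤ ∫ _ω, τ^2 ∂μ := integral_mono_ae integrable_condExp (integrable_const _) hcondvar
      _ = τ^2 := by simp
  have main : ∀ lam : ℝ, 0 < lam →
      ∫ ω, dJ lam ω ∂μ ≤ τ^2 / (2 * lam) + β^2 * lam / 2 := by
    intro lam hlam
    have hpt : ∀ ω, dJ lam ω ≤ ‖eps ω‖^2 / (2*lam) + lam * ‖Z ω‖^2 / 2 := by
      intro ω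
      rw [hdJ]
      have hre : A (Xlam lam ω) - A (Xv ω) = eps ω - (Yv ω - A (Xlam lam ω)) := by
        rw [hY]; abel
      have : ⟪(1/lam) • (A.adjoint (Yv ω - A (Xlam lam ω))) - A.adjoint (Z ω),
          Xlam lam ω - Xv ω⟫
          = (1/lam) * ⟪Yv ω - A (Xlam lam ω), eps ω - (Yv ω - A (Xlam lam ω))⟫
            - ⟪Z ω, eps ω - (Yv ω - A (Xlam lam ω))⟫ := by
        rw [inner_sub_left, real_inner_smul_left, ContinuousLinearMap.adjoint_inner_left,
          ContinuousLinearMap.adjoint_inner_left, map_sub, hre]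
      rw [this]
      exact aux_ineq lam hlam _ _ _
    have hub : Integrable (fun ω => ‖eps ω‖^2 / (2*lam) + lam * ‖Z ω‖^2 / 2) μ :=
      (heps2.div_const (2*lam)).add ((hZ2.const_mul lam).div_const 2)
    have hint : ∫ ω, dJ lam ω ∂μ ≤ ∫ ω, (‖eps ω‖^2 / (2*lam) + lam * ‖Z ω‖^2 / 2) ∂μ :=
      integral_mono (hdJint lam hlam) hub hpt
    have heq : ∫ ω, (‖eps ω‖^2 / (2*lam) + lam * ‖Z ω‖^2 / 2) ∂μ
        = (∫ ω, ‖eps ω‖^2 ∂μ) / (2*lam) + lam * (∫ ω, ‖Z ω‖^2 ∂μ) / 2 := by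
      rw [integral_add (heps2.div_const (2*lam)) ((hZ2.const_mul lam).div_const 2),
        integral_div, integral_div, integral_const_mul]
    have hfin : (∫ ω, ‖eps ω‖^2 ∂μ) / (2*lam) + lam * (∫ ω, ‖Z ω‖^2 ∂μ) / 2
        ≤ τ^2 / (2*lam) + β^2 * lam / 2 := by
      have h1 : (∫ ω, ‖eps ω‖^2 ∂μ) / (2*lam) ≤ τ^2 / (2*lam) := by
        have h2l : (0:ℝ) < 2*lam := by positivity
        rw [div_le_div_iff₀ h2l h2l]
        nlinarith [heps_bound]
      have h2 : lam * (∫ ω, ‖Z ω‖^2 ∂μ) / 2 ≤ β^2 * lam / 2 := by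
        nlinarith [mul_le_mul_of_nonneg_left hZbound hlam.le]
      linarith
    rw [heq] at hint
    linarith
  refine ⟨main, ?_⟩
  have hlam : (0:ℝ) < τ / β := by positivity
  have h := main (τ / β) hlam
  have heq : τ^2 / (2 * (τ / β)) + β^2 * (τ / β) / 2 = β * τ := by
    field_simp
    ring
  linarith [heq ▸ h]
end
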